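/- The Jacobi theta functions satisfy the fourth-power identity ϑ₂(z)⁴ + ϑ₄(z)⁴ = ϑ₃(z)⁴ for all z in the upper half-plane. -/
import Mathlib


open Complex in
/-- Jacobi theta function `ϑ₂`. -/
noncomputable def θ₂ (z : ℂ) : ℂ := ∑' m : ℤ, Complex.exp (Real.pi * I * z * ((m : ℂ) + 1/2)^2)

open Complex in
/-- Jacobi theta function `ϑ₃`. -/
noncomputable def θ₃ (z : ℂ) : ℂ := ∑' m : ℤ, Complex.exp (Real.pi * I * z * (m : ℂ)^2)

open Complex in
/-- Jacobi theta function `ϑ₄`. -/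
noncomputable def θ₄ (z : ℂ) : ℂ := ∑' m : ℤ, (-1)^m * Complex.exp (Real.pi * I * z * (m : ℂ)^2)

namespace JacobiQuartic

open Complex

/-- Summand of `θ₂`. -/
noncomputable def f2 (z : ℂ) (n : ℤ) : ℂ := Complex.exp (Real.pi * I * z * ((n : ℂ) + 1/2)^2)

/-- Summand of `θ₃`. -/
noncomputable def f3 (z : ℂ) (n : ℤ) : ℂ := Complex.exp (Real.pi * I * z * (n : ℂ)^2)

/-- Summand of `θ₄`. -/
noncomputable def f4 (z : ℂ) (n : ℤ) : ℂ :=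
  (-1)^n * Complex.exp (Real.pi * I * z * (n : ℂ)^2)

lemma θ₂_eq (z : ℂ) : θ₂ z = ∑' n : ℤ, f2 z n := rfl
lemma θ₃_eq (z : ℂ) : θ₃ z = ∑' n : ℤ, f3 z n := rfl
lemma θ₄_eq (z : ℂ) : θ₄ z = ∑' n : ℤ, f4 z n := rfl

lemma summable_norm_jt {w τ : ℂ} (hτ : 0 < τ.im) :
    Summable fun n : ℤ => ‖jacobiTheta₂_term n w τ‖ := by
  apply (summable_pow_mul_jacobiTheta₂_term_bound |w.im| hτ 0).of_nonneg_of_le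
    (fun n => norm_nonneg _)
  intro n
  simpa only [pow_zero, one_mul] using norm_jacobiTheta₂_term_le hτ le_rfl le_rfl n

lemma jt_eq_f3 (w : ℂ) (n : ℤ) : jacobiTheta₂_term n 0 w = f3 w n := by
  rw [jacobiTheta₂_term, f3]
  congr 1
  ring

lemma jt_eq_f2 (w : ℂ) (n : ℤ) :
    Complex.exp (Real.pi * I * w / 4) * jacobiTheta₂_term n (w/2) w = f2 w n := by
  rw [jacobiTheta₂_term, f2, ← Complex.exp_add]
  congr 1
  ring

lemma summable_norm_f3 {w : ℂ} (hw : 0 < w.im) : Summable fun n : ℤ => ‖f3 w n‖ := by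
  apply (summable_norm_jt (w := 0) hw).congr
  intro n
  rw [jt_eq_f3]

lemma summable_norm_f2 {w : ℂ} (hw : 0 < w.im) : Summable fun n : ℤ => ‖f2 w n‖ := by
  have h := (summable_norm_jt (w := w/2) hw).mul_left ‖Complex.exp (Real.pi * I * w / 4)‖
  apply h.congr
  intro n
  rw [← jt_eq_f2, norm_mul]

lemma summable_norm_f4 {w : ℂ} (hw : 0 < w.im) : Summable fun n : ℤ => ‖f4 w n‖ := by
  apply (summable_norm_f3 hw).congr
  intro n
  simp [f4, f3, norm_mul, norm_zpow]

/-- Even part reindexing map. -/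
def gA : ℤ × ℤ → ℤ × ℤ := fun p => (p.1 + p.2, p.1 - p.2)

/-- Odd part reindexing map (first version). -/
def gB : ℤ × ℤ → ℤ × ℤ := fun p => (p.1 + p.2 + 1, p.1 - p.2)

/-- Odd part reindexing map (second version). -/
def gC : ℤ × ℤ → ℤ × ℤ := fun p => (p.1 + p.2, p.1 - p.2 - 1)

lemma gA_inj : Function.Injective gA := by
  rintro ⟨a, b⟩ ⟨c, d⟩ h
  simp only [gA, Prod.ext_iff, Prod.mk.injEq] at h ⊢
  omega

lemma gB_inj : Function.Injective gB := by
  rintro ⟨a, b⟩ ⟨c, d⟩ h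
  simp only [gB, Prod.ext_iff, Prod.mk.injEq] at h ⊢
  omega

lemma gC_inj : Function.Injective gC := by
  rintro ⟨a, b⟩ ⟨c, d⟩ h
  simp only [gC, Prod.ext_iff, Prod.mk.injEq] at h ⊢
  omega

lemma mem_range_gA (m n : ℤ) : (m, n) ∈ Set.range gA ↔ (m + n) % 2 = 0 := by
  simp only [Set.mem_range, gA, Prod.ext_iff, Prod.mk.injEq, Prod.exists]
  constructor
  · rintro ⟨j, k, h1, h2⟩; omega
  · intro h; exact ⟨(m + n) / 2, (m - n) / 2, by omega, by omega⟩

lemma mem_range_gB (m n : ℤ) : (m, n) ∈ Set.range gB ↔ (m + n) % 2 = 1 := by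
  simp only [Set.mem_range, gB, Prod.ext_iff, Prod.mk.injEq, Prod.exists]
  constructor
  · rintro ⟨j, k, h1, h2⟩; omega
  · intro h; exact ⟨(m + n - 1) / 2, (m - n - 1) / 2, by omega, by omega⟩

lemma mem_range_gC (m n : ℤ) : (m, n) ∈ Set.range gC ↔ (m + n) % 2 = 1 := by
  simp only [Set.mem_range, gC, Prod.ext_iff, Prod.mk.injEq, Prod.exists]
  constructor
  · rintro ⟨j, k, h1, h2⟩; omega
  · intro h; exact ⟨(m + n + 1) / 2, (m - n - 1) / 2, by omega, by omega⟩

lemma range_gB : Set.range gB = (Set.range gA)ᶜ := by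
  ext ⟨m, n⟩
  simp only [Set.mem_compl_iff, mem_range_gA, mem_range_gB]
  omega

lemma range_gC : Set.range gC = (Set.range gA)ᶜ := by
  ext ⟨m, n⟩
  simp only [Set.mem_compl_iff, mem_range_gA, mem_range_gC]
  omega

lemma hasSum_split {F : ℤ × ℤ → ℂ} {g g' : ℤ × ℤ → ℤ × ℤ}
    (hg : Function.Injective g) (hg' : Function.Injective g')
    (hr : Set.range g' = (Set.range g)ᶜ) {X Y : ℂ}
    (h1 : HasSum (F ∘ g) X) (h2 : HasSum (F ∘ g') Y) : HasSum F (X + Y) := by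
  have h1' := hg.hasSum_range_iff.mpr h1
  have h2' := hg'.hasSum_range_iff.mpr h2
  rw [hr] at h2'
  exact h1'.add_compl h2'

lemma hasSum_mul {u v : ℤ → ℂ} (hu : Summable fun n => ‖u n‖)
    (hv : Summable fun n => ‖v n‖) :
    HasSum (fun p : ℤ × ℤ => u p.1 * v p.2) ((∑' n, u n) * ∑' n, v n) := by
  have h := (summable_mul_of_summable_norm hu hv).hasSum
  rwa [← tsum_mul_tsum_of_summable_norm hu hv] at h

lemma im_two_mul {z : ℂ} (hz : 0 < z.im) : 0 < (2 * z).im := by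
  have : (2 * z).im = 2 * z.im := by simp [Complex.mul_im]
  rw [this]; linarith

lemma sq3 {z : ℂ} (hz : 0 < z.im) :
    θ₃ z ^ 2 = θ₃ (2*z) * θ₃ (2*z) + θ₂ (2*z) * θ₂ (2*z) := by
  have hz2 := im_two_mul hz
  have h3 := summable_norm_f3 hz
  have h3' := summable_norm_f3 hz2
  have h2' := summable_norm_f2 hz2
  have e1 : (fun p : ℤ × ℤ => f3 z p.1 * f3 z p.2) ∘ gA
      = fun p : ℤ × ℤ => f3 (2*z) p.1 * f3 (2*z) p.2 := by
    funext p
    simp only [Function.comp_apply, gA, f3, ← Complex.exp_add]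
    congr 1
    push_cast
    ring
  have e2 : (fun p : ℤ × ℤ => f3 z p.1 * f3 z p.2) ∘ gB
      = fun p : ℤ × ℤ => f2 (2*z) p.1 * f2 (2*z) p.2 := by
    funext p
    simp only [Function.comp_apply, gB, f3, f2, ← Complex.exp_add]
    congr 1
    push_cast
    ring
  have H : HasSum (fun p : ℤ × ℤ => f3 z p.1 * f3 z p.2)
      (θ₃ (2*z) * θ₃ (2*z) + θ₂ (2*z) * θ₂ (2*z)) := by
    refine hasSum_split gA_inj gB_inj range_gB ?_ ?_
    · rw [e1, θ₃_eq]; exact hasSum_mul h3' h3'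
    · rw [e2, θ₂_eq]; exact hasSum_mul h2' h2'
  calc θ₃ z ^ 2 = (∑' n, f3 z n) * (∑' n, f3 z n) := by rw [θ₃_eq]; ring
    _ = ∑' p : ℤ × ℤ, f3 z p.1 * f3 z p.2 := tsum_mul_tsum_of_summable_norm h3 h3
    _ = _ := H.tsum_eq

lemma sq4 {z : ℂ} (hz : 0 < z.im) :
    θ₄ z ^ 2 = θ₃ (2*z) * θ₃ (2*z) + -(θ₂ (2*z) * θ₂ (2*z)) := by
  have hz2 := im_two_mul hz
  have h4 := summable_norm_f4 hz
  have h3' := summable_norm_f3 hz2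
  have h2' := summable_norm_f2 hz2
  have e1 : (fun p : ℤ × ℤ => f4 z p.1 * f4 z p.2) ∘ gA
      = fun p : ℤ × ℤ => f3 (2*z) p.1 * f3 (2*z) p.2 := by
    funext p
    obtain ⟨j, k⟩ := p
    have hs : ((-1 : ℂ) ^ (j + k)) * ((-1 : ℂ) ^ (j - k)) = 1 := by
      rw [← zpow_add₀ (by norm_num : (-1 : ℂ) ≠ 0)]
      exact Even.neg_one_zpow ⟨j, by ring⟩
    simp only [Function.comp_apply, gA, f4, f3]
    rw [mul_mul_mul_comm, hs, one_mul, ← Complex.exp_add, ← Complex.exp_add]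
    congr 1
    push_cast
    ring
  have e2 : (fun p : ℤ × ℤ => f4 z p.1 * f4 z p.2) ∘ gB
      = fun p : ℤ × ℤ => -(f2 (2*z) p.1 * f2 (2*z) p.2) := by
    funext p
    obtain ⟨j, k⟩ := p
    have hs : ((-1 : ℂ) ^ (j + k + 1)) * ((-1 : ℂ) ^ (j - k)) = -1 := by
      rw [← zpow_add₀ (by norm_num : (-1 : ℂ) ≠ 0)]
      exact Odd.neg_one_zpow ⟨j, by ring⟩
    simp only [Function.comp_apply, gB, f4, f2]
    rw [mul_mul_mul_comm, hs, ← Complex.exp_add, ← Complex.exp_add, neg_one_mul, neg_inj]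
    congr 1
    push_cast
    ring
  have H : HasSum (fun p : ℤ × ℤ => f4 z p.1 * f4 z p.2)
      (θ₃ (2*z) * θ₃ (2*z) + -(θ₂ (2*z) * θ₂ (2*z))) := by
    refine hasSum_split gA_inj gB_inj range_gB ?_ ?_
    · rw [e1, θ₃_eq]; exact hasSum_mul h3' h3'
    · rw [e2, θ₂_eq]; exact (hasSum_mul h2' h2').neg
  calc θ₄ z ^ 2 = (∑' n, f4 z n) * (∑' n, f4 z n) := by rw [θ₄_eq]; ring
    _ = ∑' p : ℤ × ℤ, f4 z p.1 * f4 z p.2 := tsum_mul_tsum_of_summable_norm h4 h4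
    _ = _ := H.tsum_eq

lemma sq2 {z : ℂ} (hz : 0 < z.im) :
    θ₂ z ^ 2 = θ₂ (2*z) * θ₃ (2*z) + θ₃ (2*z) * θ₂ (2*z) := by
  have hz2 := im_two_mul hz
  have h2 := summable_norm_f2 hz
  have h3' := summable_norm_f3 hz2
  have h2' := summable_norm_f2 hz2
  have e1 : (fun p : ℤ × ℤ => f2 z p.1 * f2 z p.2) ∘ gA
      = fun p : ℤ × ℤ => f2 (2*z) p.1 * f3 (2*z) p.2 := by
    funext p
    simp only [Function.comp_apply, gA, f2, f3, ← Complex.exp_add]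
    congr 1
    push_cast
    ring
  have e2 : (fun p : ℤ × ℤ => f2 z p.1 * f2 z p.2) ∘ gC
      = fun p : ℤ × ℤ => f3 (2*z) p.1 * f2 (2*z) p.2 := by
    funext p
    simp only [Function.comp_apply, gC, f2, f3, ← Complex.exp_add]
    congr 1
    push_cast
    ring
  have H : HasSum (fun p : ℤ × ℤ => f2 z p.1 * f2 z p.2)
      (θ₂ (2*z) * θ₃ (2*z) + θ₃ (2*z) * θ₂ (2*z)) := by
    refine hasSum_split gA_inj gC_inj range_gC ?_ ?_
    · rw [e1, θ₂_eq, θ₃_eq]; exact hasSum_mul h2' h3'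
    · rw [e2, θ₂_eq, θ₃_eq]; exact hasSum_mul h3' h2'
  calc θ₂ z ^ 2 = (∑' n, f2 z n) * (∑' n, f2 z n) := by rw [θ₂_eq]; ring
    _ = ∑' p : ℤ × ℤ, f2 z p.1 * f2 z p.2 := tsum_mul_tsum_of_summable_norm h2 h2
    _ = _ := H.tsum_eq

end JacobiQuartic

theorem jacobi_fourth_power (z : ℂ) (hz : 0 < z.im) :
    θ₂ z ^ 4 + θ₄ z ^ 4 = θ₃ z ^ 4 := by
  have h2 := JacobiQuartic.sq2 hz
  have h3 := JacobiQuartic.sq3 hz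
  have h4 := JacobiQuartic.sq4 hz
  calc θ₂ z ^ 4 + θ₄ z ^ 4 = (θ₂ z ^ 2) ^ 2 + (θ₄ z ^ 2) ^ 2 := by ring
    _ = (θ₃ z ^ 2) ^ 2 := by rw [h2, h3, h4]; ring
    _ = θ₃ z ^ 4 := by ring
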